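/- arXiv:2201.02186 — 8 statements merged into one kernel-verified Lean document; each statement's English description precedes it below -/
import Mathlib

section
/- Let f be a strongly nondegenerate self-concordant function on an open convex domain D_f contained in the positive orthant of R^n. Then for all x in D_f, the Hessian satisfies H(x) ≽ (1/n) Diag(1/x_1^2, …, 1/x_n^2) in the Loewner order, i.e., z^T H(x) z ≥ (1/n) Σ_i (z_i/x_i)^2 for all z ∈ R^n. -/
/-!
The Dikin ellipsoid `{y | (y - x)ᵀ H(x) (y - x) < 1}` lies in `D_f`, hence in the positive
orthant. The point `x - (x_i / z_i) z` has vanishing `i`-th coordinate, so it lies outside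
the ellipsoid: `(x_i / z_i)² zᵀH(x)z ≥ 1`.
Summing `(z_i / x_i)² ≤ zᵀH(x)z` over the `n` coordinates gives the bound.
-/

/-- Local quadratic form `v ↦ vᵀ H v` induced by a Hessian matrix `H`. -/
noncomputable def quadForm {n : ℕ} (H : Matrix (Fin n) (Fin n) ℝ) (v : Fin n → ℝ) : ℝ :=
  dotProduct v (H.mulVec v)

lemma quadForm_smul {n : ℕ} (H : Matrix (Fin n) (Fin n) ℝ) (c : ℝ) (v : Fin n → ℝ) :
    quadForm H (c • v) = c ^ 2 * quadForm H v := by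
  simp only [quadForm, Matrix.mulVec_smul, dotProduct_smul, smul_dotProduct, smul_eq_mul]
  ring

lemma sq_le_mul_sq_of_forall_add_mul_pos {a b q : ℝ} (hq : 0 ≤ q)
    (h : ∀ t : ℝ, t ^ 2 * q < 1 → 0 < a + t * b) : b ^ 2 ≤ q * a ^ 2 := by
  by_contra! hlt
  have hb : b ≠ 0 := by
    rintro rfl
    nlinarith [sq_nonneg a]
  have hin : (-a / b) ^ 2 * q < 1 := by
    rw [div_pow, neg_sq, div_mul_eq_mul_div, div_lt_one (by positivity)]
    linarith
  have := h (-a / b) hin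
  rw [div_mul_cancel₀ _ hb] at this
  linarith

section Dikin

variable {n : ℕ} {H : Matrix (Fin n) (Fin n) ℝ} {x : Fin n → ℝ}

lemma sq_div_le_quadForm_of_dikin_pos (hH : H.PosSemidef)
    (hball : ∀ y, quadForm H (y - x) < 1 → ∀ i, 0 < y i) (z : Fin n → ℝ) (i : Fin n) :
    (z i / x i) ^ 2 ≤ quadForm H z := by
  have hq : 0 ≤ quadForm H z := hH.dotProduct_mulVec_nonneg z
  have hx : 0 < x i := hball x (by simp [quadForm]) i
  have hline : ∀ t : ℝ, t ^ 2 * quadForm H z < 1 → 0 < x i + t * z i := fun t ht => by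
    simpa using hball (x + t • z) (by rwa [add_sub_cancel_left, quadForm_smul]) i
  rw [div_pow, div_le_iff₀ (by positivity)]
  exact sq_le_mul_sq_of_forall_add_mul_pos hq hline

lemma mean_sq_div_le_quadForm_of_dikin_pos (hH : H.PosSemidef)
    (hball : ∀ y, quadForm H (y - x) < 1 → ∀ i, 0 < y i) (z : Fin n → ℝ) :
    (1 / (n : ℝ)) * ∑ i, (z i / x i) ^ 2 ≤ quadForm H z := by
  have hsum : ∑ i, (z i / x i) ^ 2 ≤ n * quadForm H z := by
    simpa using Finset.sum_le_sum (s := .univ) fun i _ =>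
      sq_div_le_quadForm_of_dikin_pos hH hball z i
  rcases Nat.eq_zero_or_pos n with rfl | hn
  · have hq : 0 ≤ quadForm H z := hH.dotProduct_mulVec_nonneg z
    simpa using hq
  · rw [one_div, inv_mul_le_iff₀ (by exact_mod_cast hn)]
    exact hsum

end Dikin

theorem stmt1_general (n : ℕ) (D : Set (Fin n → ℝ))
    (H : (Fin n → ℝ) → Matrix (Fin n) (Fin n) ℝ)
    (hDpos : ∀ x ∈ D, ∀ i, 0 < x i)
    (hposdef : ∀ x ∈ D, (H x).PosDef)
    (hsc1 : ∀ x ∈ D, ∀ y : Fin n → ℝ, quadForm (H x) (y - x) < 1 → y ∈ D) :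
    ∀ x ∈ D, ∀ z : Fin n → ℝ,
      (1 / (n : ℝ)) * ∑ i, (z i / x i) ^ 2 ≤ quadForm (H x) z := fun x hx =>
  mean_sq_div_le_quadForm_of_dikin_pos (hposdef x hx).posSemidef
    fun y hy => hDpos y (hsc1 x hx y hy)

/-- Hessian lower bound `H(x) ≽ (1/n) Diag(1/x²)` for a self-concordant
function with domain in the positive orthant. -/
theorem stmt1 (n : ℕ) (D : Set (Fin n → ℝ)) (f : (Fin n → ℝ) → ℝ)
    (H : (Fin n → ℝ) → Matrix (Fin n) (Fin n) ℝ)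
    (hopen : IsOpen D) (hconv : Convex ℝ D)
    (hDpos : ∀ x ∈ D, ∀ i, 0 < x i)
    (hf : ContDiffOn ℝ 2 f D)
    (hposdef : ∀ x ∈ D, (H x).PosDef)
    (hsc1 : ∀ x ∈ D, ∀ y : Fin n → ℝ, quadForm (H x) (y - x) < 1 → y ∈ D)
    (hsc2 : ∀ x ∈ D, ∀ y : Fin n → ℝ, quadForm (H x) (y - x) < 1 →
      ∀ v : Fin n → ℝ, v ≠ 0 →
        1 - Real.sqrt (quadForm (H x) (y - x)) ≤
            Real.sqrt (quadForm (H y) v) / Real.sqrt (quadForm (H x) v) ∧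
        Real.sqrt (quadForm (H y) v) / Real.sqrt (quadForm (H x) v) ≤
            1 / (1 - Real.sqrt (quadForm (H x) (y - x)))) :
    ∀ x ∈ D, ∀ z : Fin n → ℝ,
      (1 / (n : ℝ)) * ∑ i, (z i / x i) ^ 2 ≤ quadForm (H x) z :=
  stmt1_general n D H hDpos hposdef hsc1
end

section
/- Let (K_t)_{t>1} be a family of subsets of R_{≥0}^n and K ⊆ T^n (T = R ∪ {−∞}) such that the Hausdorff distance d_∞(log_t K_t, K) tends to 0 as t → ∞, where log_t is applied entrywise with log_t 0 = −∞. Then K is tropically convex: for all u, v ∈ K and all λ, μ ∈ T with max(λ, μ) = 0, the point max(u + λ·1, v + μ·1) (entrywise maximum, with scalar added to every coordinate) belongs to K, provided K is closed. -/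
/-!
A point of the tropical segment `max (u + λ) (v + μ)` is the tropicalization of a classical
convex combination: if `x, y ∈ K_t` approximate `u, v`, then the point
`(t^λ x + t^μ y) / (t^λ + t^μ)` of `K_t` has `log_t` within `log_t 2` of
`max (λ + log_t x) (μ + log_t y)`, since `max X Y ≤ X + Y ≤ 2 max X Y` and
`1 ≤ t^λ + t^μ ≤ 2` when `max λ μ = 0`.
As `t → ∞` the error `log_t 2` vanishes, so every point of the segment is a limit of points
of `K`, hence lies in the closed set `K`.
-/

/-- Entrywise base-`t` logarithm with the convention `log_t 0 = −∞`, valued in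
`T = ℝ ∪ {−∞}` modelled inside `EReal`. -/
noncomputable def logt (t : ℝ) (a : ℝ) : EReal :=
  if a = 0 then ⊥ else ((Real.logb t a : ℝ) : EReal)

open Filter Topology

/-- `a` and `b` are within `ε` of each other in the sense of the `d_∞` distance on `T`. -/
def ENear (ε : ℝ) (a b : EReal) : Prop :=
  a ≤ b + ε ∧ b ≤ a + ε

namespace ENear

variable {ε δ : ℝ} {a a' b b' c : EReal}

theorem symm (h : ENear ε a b) : ENear ε b a := ⟨h.2, h.1⟩

theorem mono (hεδ : ε ≤ δ) (h : ENear ε a b) : ENear δ a b := by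
  have hle : (ε : EReal) ≤ δ := EReal.coe_le_coe_iff.mpr hεδ
  exact ⟨h.1.trans (by gcongr), h.2.trans (by gcongr)⟩

theorem trans (hab : ENear ε a b) (hbc : ENear δ b c) : ENear (ε + δ) a c := by
  constructor
  · calc a ≤ b + ε := hab.1
      _ ≤ c + δ + ε := by gcongr; exact hbc.1
      _ = c + ↑(ε + δ) := by rw [add_assoc, EReal.coe_add, add_comm (δ : EReal)]
  · calc c ≤ b + δ := hbc.2
      _ ≤ a + ε + δ := by gcongr; exact hab.2
      _ = a + ↑(ε + δ) := by rw [add_assoc, EReal.coe_add]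

theorem add_left (h : ENear ε a b) (c : EReal) : ENear ε (c + a) (c + b) := by
  constructor
  · rw [add_assoc]; gcongr; exact h.1
  · rw [add_assoc]; gcongr; exact h.2

theorem max (ha : ENear ε a a') (hb : ENear ε b b') : ENear ε (max a b) (max a' b') :=
  ⟨max_le (ha.1.trans (by gcongr; exact le_max_left _ _))
      (hb.1.trans (by gcongr; exact le_max_right _ _)),
    max_le (ha.2.trans (by gcongr; exact le_max_left _ _))
      (hb.2.trans (by gcongr; exact le_max_right _ _))⟩

theorem tendsto {α : Type*} {l : Filter α} {p : α → EReal} {w : EReal} {ε : α → ℝ}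
    (hε : Tendsto ε l (𝓝 0)) (h : ∀ k, ENear (ε k) (p k) w) : Tendsto p l (𝓝 w) := by
  induction w using EReal.rec with
  | bot =>
    have hp : p = fun _ => ⊥ := funext fun k => le_bot_iff.mp (by simpa using (h k).1)
    rw [hp]; exact tendsto_const_nhds
  | top =>
    have hp : p = fun _ => ⊤ := funext fun k => by
      by_contra hne
      exact EReal.add_ne_top hne (EReal.coe_ne_top _) (top_le_iff.mp (h k).2)
    rw [hp]; exact tendsto_const_nhds
  | coe r =>
    have hfin : ∀ k, p k ≠ ⊥ ∧ p k ≠ ⊤ := fun k =>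
      ⟨fun hb => by simpa [hb] using (h k).2, fun ht => by
        have := (h k).1
        rw [ht, ← EReal.coe_add, top_le_iff] at this
        exact EReal.coe_ne_top _ this⟩
    have hp : p = fun k => ((p k).toReal : EReal) :=
      funext fun k => (EReal.coe_toReal (hfin k).2 (hfin k).1).symm
    rw [hp]
    refine EReal.tendsto_coe.mpr (tendsto_of_tendsto_of_tendsto_of_le_of_le
      (by simpa using hε.const_sub r) (by simpa using hε.const_add r) (fun k => ?_) fun k => ?_)
    · have := (h k).2
      rw [hp, ← EReal.coe_add, EReal.coe_le_coe_iff] at this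
      linarith
    · have := (h k).1
      rw [hp, ← EReal.coe_add, EReal.coe_le_coe_iff] at this
      exact this

end ENear

theorem IsClosed.mem_of_forall_enear {ι : Type*} {S : Set (ι → EReal)} (hS : IsClosed S)
    {w : ι → EReal} (h : ∀ ε : ℝ, 0 < ε → ∃ p ∈ S, ∀ i, ENear ε (p i) (w i)) :
    w ∈ S := by
  choose p hpS hpw using fun k : ℕ => h (1 / (k + 1)) Nat.one_div_pos_of_nat
  refine hS.mem_of_tendsto (tendsto_pi_nhds.mpr fun i => ?_ : Tendsto p atTop _)
    (Eventually.of_forall hpS)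
  exact ENear.tendsto tendsto_one_div_add_atTop_nhds_zero_nat fun k => hpw k i

section logt

variable {t : ℝ}

theorem logt_zero (t : ℝ) : logt t 0 = ⊥ := if_pos rfl

theorem logt_of_pos {a : ℝ} (ha : 0 < a) : logt t a = (Real.logb t a : EReal) :=
  if_neg ha.ne'

theorem logt_mul {a b : ℝ} (ha : 0 ≤ a) (hb : 0 ≤ b) :
    logt t (a * b) = logt t a + logt t b := by
  rcases ha.eq_or_lt with rfl | ha
  · simp [logt_zero]
  rcases hb.eq_or_lt with rfl | hb
  · simp [logt_zero]
  rw [logt_of_pos (mul_pos ha hb), logt_of_pos ha, logt_of_pos hb,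
    Real.logb_mul ha.ne' hb.ne', EReal.coe_add]

theorem logt_mono (ht : 1 < t) {a b : ℝ} (ha : 0 ≤ a) (hab : a ≤ b) :
    logt t a ≤ logt t b := by
  rcases ha.eq_or_lt with rfl | ha
  · simp [logt_zero]
  rw [logt_of_pos ha, logt_of_pos (ha.trans_le hab)]
  exact EReal.coe_le_coe_iff.mpr (Real.logb_le_logb_of_le ht ha hab)

theorem logt_max (ht : 1 < t) {a b : ℝ} (ha : 0 ≤ a) (hb : 0 ≤ b) :
    logt t (max a b) = max (logt t a) (logt t b) := by
  rcases le_total a b with hab | hab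
  · rw [max_eq_right hab, max_eq_right (logt_mono ht ha hab)]
  · rw [max_eq_left hab, max_eq_left (logt_mono ht hb hab)]

theorem enear_logt_of_le_two_mul (ht : 1 < t) {a b : ℝ} (ha : 0 ≤ a) (hb : 0 ≤ b)
    (hab : a ≤ 2 * b) (hba : b ≤ 2 * a) : ENear (Real.logb t 2) (logt t a) (logt t b) := by
  have key : ∀ {x y : ℝ}, 0 ≤ x → 0 ≤ y → x ≤ 2 * y →
      logt t x ≤ logt t y + Real.logb t 2 :=
    fun {x y} hx hy hxy => calc
      logt t x ≤ logt t (2 * y) := logt_mono ht hx hxy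
      _ = logt t y + Real.logb t 2 := by
        rw [logt_mul zero_le_two hy, logt_of_pos two_pos, add_comm]
  exact ⟨key ha hb hab, key hb ha hba⟩

end logt

/-- The weight `t ^ λ` dequantizing a tropical scalar `λ ∈ T`, with `t ^ (−∞) = 0`. -/
noncomputable def expt (t : ℝ) (lam : EReal) : ℝ :=
  if lam = ⊥ then 0 else t ^ lam.toReal

section expt

variable {t : ℝ} {lam : EReal}

theorem expt_nonneg (ht : 0 ≤ t) (lam : EReal) : 0 ≤ expt t lam := by
  unfold expt
  split_ifs
  exacts [le_rfl, Real.rpow_nonneg ht _]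

theorem expt_zero (t : ℝ) : expt t 0 = 1 := by
  simp [expt]

theorem expt_le_one (ht : 1 ≤ t) (hlam : lam ≤ 0) : expt t lam ≤ 1 := by
  unfold expt
  split_ifs
  · exact zero_le_one
  · exact Real.rpow_le_one_of_one_le_of_nonpos ht (EReal.toReal_nonpos hlam)

theorem logt_expt (ht : 1 < t) (hlam : lam ≠ ⊤) : logt t (expt t lam) = lam := by
  induction lam using EReal.rec with
  | bot => simp [expt, logt_zero]
  | top => exact absurd rfl hlam
  | coe r =>
    rw [expt, if_neg (EReal.coe_ne_bot r), EReal.toReal_coe,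
      logt_of_pos (Real.rpow_pos_of_pos (by linarith) r),
      Real.logb_rpow (by linarith) ht.ne']

end expt

theorem expt_add_expt_mem_Icc {t : ℝ} (ht : 1 ≤ t) {lam mu : EReal} (hmax : max lam mu = 0) :
    expt t lam + expt t mu ∈ Set.Icc 1 2 := by
  have h0 : 0 ≤ t := by linarith
  have hlam : lam ≤ 0 := hmax ▸ le_max_left _ _
  have hmu : mu ≤ 0 := hmax ▸ le_max_right _ _
  have := expt_le_one ht hlam
  have := expt_le_one ht hmu
  have := expt_nonneg h0 lam
  have := expt_nonneg h0 mu
  rcases max_choice lam mu with h | h <;> rw [hmax] at h <;> subst h <;>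
    rw [expt_zero] at * <;> constructor <;> linarith

theorem enear_logt_div_add {t : ℝ} (ht : 1 < t) {a b x y : ℝ} (ha : 0 ≤ a) (hb : 0 ≤ b)
    (hx : 0 ≤ x) (hy : 0 ≤ y) (hs : a + b ∈ Set.Icc 1 2) :
    ENear (Real.logb t 2) (logt t ((a * x + b * y) / (a + b)))
      (max (logt t a + logt t x) (logt t b + logt t y)) := by
  have hax := mul_nonneg ha hx
  have hby := mul_nonneg hb hy
  rw [← logt_mul ha hx, ← logt_mul hb hy, ← logt_max ht hax hby]
  have hmax := max_le_add_of_nonneg hax hby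
  apply enear_logt_of_le_two_mul ht (by positivity) (by positivity)
  · calc (a * x + b * y) / (a + b) ≤ a * x + b * y := div_le_self (by positivity) hs.1
      _ ≤ 2 * max (a * x) (b * y) := by
        linarith [le_max_left (a * x) (b * y), le_max_right (a * x) (b * y)]
  · calc max (a * x) (b * y) ≤ 2 * ((a * x + b * y) / 2) := by linarith
      _ ≤ 2 * ((a * x + b * y) / (a + b)) := by
        gcongr
        · linarith [hs.1]
        · exact hs.2

theorem eventually_logb_two_le {δ : ℝ} (hδ : 0 < δ) :
    ∀ᶠ t in atTop, Real.logb t 2 ≤ δ := by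
  have h : Tendsto (fun t => Real.log 2 * (Real.log t)⁻¹) atTop (𝓝 (Real.log 2 * 0)) :=
    Real.tendsto_log_atTop.inv_tendsto_atTop.const_mul _
  rw [mul_zero] at h
  exact (h.eventually (ge_mem_nhds hδ)).mono fun t ht => by rwa [Real.logb, div_eq_mul_inv]

theorem exists_enear_logt_tropical_combination {ι : Type*} {t δ : ℝ} (ht : 1 < t)
    (hlog : Real.logb t 2 ≤ δ) {C : Set (ι → ℝ)} (hC : Convex ℝ C)
    (hCnn : C ⊆ {x | ∀ i, 0 ≤ x i}) {x y : ι → ℝ} (hx : x ∈ C) (hy : y ∈ C)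
    {lam mu : EReal} (hmax : max lam mu = 0) :
    ∃ z ∈ C, ∀ i, ENear δ (logt t (z i)) (max (lam + logt t (x i)) (mu + logt t (y i))) := by
  have hs := expt_add_expt_mem_Icc ht.le hmax
  have ht0 : 0 ≤ t := by linarith
  have ha := expt_nonneg ht0 lam
  have hb := expt_nonneg ht0 mu
  set a := expt t lam
  set b := expt t mu
  refine ⟨(a / (a + b)) • x + (b / (a + b)) • y,
    convex_iff_div.mp hC hx hy ha hb (by linarith [hs.1]), fun i => ?_⟩
  have hzi : ((a / (a + b)) • x + (b / (a + b)) • y) i = (a * x i + b * y i) / (a + b) := by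
    simp only [Pi.add_apply, Pi.smul_apply, smul_eq_mul]
    ring
  have hlam : lam ≠ ⊤ := ((hmax ▸ le_max_left lam mu).trans_lt EReal.zero_lt_top).ne
  have hmu : mu ≠ ⊤ := ((hmax ▸ le_max_right lam mu).trans_lt EReal.zero_lt_top).ne
  have h := enear_logt_div_add ht ha hb (hCnn hx i) (hCnn hy i) hs
  rw [logt_expt ht hlam, logt_expt ht hmu, ← hzi] at h
  exact h.mono hlog

theorem stmt6_general (n : ℕ) (K : ℝ → Set (Fin n → ℝ)) (Kbar : Set (Fin n → EReal))
    (hKt : ∀ t : ℝ, 1 < t → K t ⊆ {x | ∀ i, 0 ≤ x i})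
    (hKconv : ∀ t : ℝ, 1 < t → Convex ℝ (K t))
    (hclosed : IsClosed Kbar)
    (hconv : ∀ ε : ℝ, 0 < ε → ∃ t₀ : ℝ, 1 < t₀ ∧ ∀ t : ℝ, t₀ ≤ t →
      (∀ x ∈ K t, ∃ u ∈ Kbar, ∀ i,
          logt t (x i) ≤ u i + (ε : EReal) ∧ u i ≤ logt t (x i) + (ε : EReal)) ∧
      (∀ u ∈ Kbar, ∃ x ∈ K t, ∀ i,
          logt t (x i) ≤ u i + (ε : EReal) ∧ u i ≤ logt t (x i) + (ε : EReal))) :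
    ∀ u ∈ Kbar, ∀ v ∈ Kbar, ∀ lam mu : EReal, max lam mu = 0 →
      (fun i => max (u i + lam) (v i + mu)) ∈ Kbar := by
  intro u hu v hv lam mu hmax
  refine hclosed.mem_of_forall_enear fun ε hε => ?_
  obtain ⟨t₀, ht₀, hT⟩ := hconv (ε / 3) (by positivity)
  obtain ⟨t, ht₀t, hlog⟩ := ((eventually_ge_atTop t₀).and (eventually_logb_two_le
    (by positivity : 0 < ε / 3))).exists
  have ht : 1 < t := ht₀.trans_le ht₀t
  obtain ⟨hKtKbar, hKbarKt⟩ := hT t ht₀t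
  obtain ⟨x, hx, hxu⟩ := hKbarKt u hu
  obtain ⟨y, hy, hyv⟩ := hKbarKt v hv
  obtain ⟨z, hz, hzL⟩ := exists_enear_logt_tropical_combination ht hlog (hKconv t ht)
    (hKt t ht) hx hy hmax
  obtain ⟨p, hp, hpz⟩ := hKtKbar z hz
  refine ⟨p, hp, fun i => ?_⟩
  have hLw : ENear (ε / 3) (max (lam + logt t (x i)) (mu + logt t (y i)))
      (max (u i + lam) (v i + mu)) := by
    simpa only [add_comm lam, add_comm mu] using
      (ENear.add_left (hxu i) lam).max (ENear.add_left (hyv i) mu)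
  exact ((ENear.symm (hpz i)).trans ((hzL i).trans hLw)).mono (by linarith)

/-- if the sets `log_t K_t` (with each `K_t` convex in the nonnegative
orthant) converge in the `d_∞` Hausdorff sense to a closed set `K ⊆ T^n`, then `K` is
tropically convex. -/
theorem stmt6 (n : ℕ) (K : ℝ → Set (Fin n → ℝ)) (Kbar : Set (Fin n → EReal))
    (hKt : ∀ t : ℝ, 1 < t → K t ⊆ {x | ∀ i, 0 ≤ x i})
    (hKconv : ∀ t : ℝ, 1 < t → Convex ℝ (K t))
    (hbar : ∀ u ∈ Kbar, ∀ i, u i ≠ ⊤)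
    (hclosed : IsClosed Kbar)
    (hconv : ∀ ε : ℝ, 0 < ε → ∃ t₀ : ℝ, 1 < t₀ ∧ ∀ t : ℝ, t₀ ≤ t →
      (∀ x ∈ K t, ∃ u ∈ Kbar, ∀ i,
          logt t (x i) ≤ u i + (ε : EReal) ∧ u i ≤ logt t (x i) + (ε : EReal)) ∧
      (∀ u ∈ Kbar, ∃ x ∈ K t, ∀ i,
          logt t (x i) ≤ u i + (ε : EReal) ∧ u i ≤ logt t (x i) + (ε : EReal))) :
    ∀ u ∈ Kbar, ∀ v ∈ Kbar, ∀ lam mu : EReal, max lam mu = 0 →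
      (fun i => max (u i + lam) (v i + mu)) ∈ Kbar :=
  stmt6_general n K Kbar hKt hKconv hclosed hconv
end

section
/- Let K ⊆ T^n be a closed tropically convex set containing the point (−∞,…,−∞), let c ∈ T^n, and for λ ∈ R let C(λ) be the tropical barycenter (coordinatewise supremum, which belongs to the set) of K_λ = {u ∈ K : max_i(c_i + u_i) ≤ −λ}, assumed nonempty and bounded above. Then for λ' ≤ λ one has C(λ) ≤ C(λ') ≤ C(λ) + (λ − λ')·1 entrywise; in particular the tropical central path λ ↦ C(λ) is nonincreasing and 1-Lipschitz in the sup-norm. -/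
/-!
Both bounds compare `C λ` and `C λ'` through the maximality of the barycenter. Since
`-λ ≤ -λ'`, the point `C λ` is feasible for `λ'`, so `C λ ≤ C λ'`. Conversely, tropical
convexity together with `(−∞,…,−∞) ∈ K` makes `K` closed under subtracting a nonnegative
constant from every coordinate, and subtracting `λ - λ'` from `C λ'` lowers the tropical
inner product with `c` by the same amount, to at most `-λ`; hence `C λ' - (λ - λ')·1 ≤ C λ`.
-/

open EReal

def TropicallyConvex {ι : Type*} (S : Set (ι → EReal)) : Prop :=
  ∀ u ∈ S, ∀ v ∈ S, ∀ lam mu : EReal, max lam mu = 0 →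
    (fun i => max (u i + lam) (v i + mu)) ∈ S

theorem TropicallyConvex.sub_const_mem {ι : Type*} {S : Set (ι → EReal)}
    (hS : TropicallyConvex S) (hbot : (fun _ => ⊥) ∈ S) {u : ι → EReal} (hu : u ∈ S)
    {r : ℝ} (hr : 0 ≤ r) : (fun i => u i - r) ∈ S := by
  have hmax : max (-(r : EReal)) 0 = 0 := max_eq_right (by exact_mod_cast neg_nonpos.mpr hr)
  simpa [sub_eq_add_neg] using hS u hu _ hbot _ _ hmax

theorem iSup_add_sub_const_le {ι : Type*} {c u : ι → EReal} {a : EReal}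
    (h : ⨆ i, c i + u i ≤ a) (r : ℝ) : ⨆ i, c i + (u i - r) ≤ a - r := by
  refine iSup_le fun i => ?_
  rw [← add_sub_assoc]
  exact EReal.sub_le_sub ((le_iSup (fun i => c i + u i) i).trans h) le_rfl

theorem stmt7_general (n : ℕ) (Kbar : Set (Fin n → EReal)) (c : Fin n → EReal)
    (htconv : ∀ u ∈ Kbar, ∀ v ∈ Kbar, ∀ lam mu : EReal, max lam mu = 0 →
      (fun i => max (u i + lam) (v i + mu)) ∈ Kbar)
    (hbot : (fun _ : Fin n => (⊥ : EReal)) ∈ Kbar)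
    (C : ℝ → Fin n → EReal)
    (hC : ∀ lam : ℝ,
      (C lam ∈ Kbar ∧ (⨆ i : Fin n, (c i + C lam i)) ≤ ((-lam : ℝ) : EReal)) ∧
      ∀ u ∈ Kbar, (⨆ i : Fin n, (c i + u i)) ≤ ((-lam : ℝ) : EReal) →
        ∀ i, u i ≤ C lam i) :
    ∀ lam lam' : ℝ, lam' ≤ lam →
      ∀ i, C lam i ≤ C lam' i ∧ C lam' i ≤ C lam i + ((lam - lam' : ℝ) : EReal) := by
  intro lam lam' hle i
  obtain ⟨⟨hmem, hfeas⟩, -⟩ := hC lam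
  obtain ⟨⟨hmem', hfeas'⟩, hsup'⟩ := hC lam'
  refine ⟨hsup' _ hmem (hfeas.trans (by exact_mod_cast neg_le_neg hle)) i, ?_⟩
  have hshift_mem : (fun j => C lam' j - (lam - lam' : ℝ)) ∈ Kbar :=
    TropicallyConvex.sub_const_mem htconv hbot hmem' (sub_nonneg.mpr hle)
  have hshift_feas : ⨆ j, c j + (C lam' j - (lam - lam' : ℝ)) ≤ ((-lam : ℝ) : EReal) := by
    convert iSup_add_sub_const_le hfeas' (lam - lam') using 1
    norm_cast; ring
  exact (EReal.sub_le_iff_le_add (.inl (coe_ne_bot _)) (.inl (coe_ne_top _))).mp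
    ((hC lam).2 _ hshift_mem hshift_feas i)

/-- monotonicity and 1-Lipschitz property of the tropical central path:
`C(λ) ≤ C(λ') ≤ C(λ) + (λ − λ')·1` for `λ' ≤ λ`. Here `T = ℝ ∪ {−∞}` is modelled
inside `EReal`, `K` is a closed tropically convex set containing `(−∞,…,−∞)`, and
`C(λ)` is the tropical barycenter of `K_λ = {u ∈ K : maxᵢ(cᵢ + uᵢ) ≤ −λ}`. -/
theorem stmt7 (n : ℕ) (Kbar : Set (Fin n → EReal)) (c : Fin n → EReal)
    (hKtop : ∀ u ∈ Kbar, ∀ i, u i ≠ ⊤) (hctop : ∀ i, c i ≠ ⊤)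
    (hclosed : IsClosed Kbar)
    (htconv : ∀ u ∈ Kbar, ∀ v ∈ Kbar, ∀ lam mu : EReal, max lam mu = 0 →
      (fun i => max (u i + lam) (v i + mu)) ∈ Kbar)
    (hbot : (fun _ : Fin n => (⊥ : EReal)) ∈ Kbar)
    (C : ℝ → Fin n → EReal)
    (hC : ∀ lam : ℝ,
      (C lam ∈ Kbar ∧ (⨆ i : Fin n, (c i + C lam i)) ≤ ((-lam : ℝ) : EReal)) ∧
      ∀ u ∈ Kbar, (⨆ i : Fin n, (c i + u i)) ≤ ((-lam : ℝ) : EReal) →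
        ∀ i, u i ≤ C lam i) :
    ∀ lam lam' : ℝ, lam' ≤ lam →
      ∀ i, C lam i ≤ C lam' i ∧ C lam' i ≤ C lam i + ((lam - lam' : ℝ) : EReal) :=
  stmt7_general n Kbar c htconv hbot C hC
end

section
/- Let K be a convex body in R^n, c ∈ R^n, and f a ϑ-self-concordant barrier on int K with gradient g. For η > 0 let C(η) be the minimizer of x ↦ η⟨c,x⟩ + f(x) over int K, and let val be the minimum of ⟨c,x⟩ over K. Then ⟨c, C(η)⟩ ≤ val + ϑ/η. -/
open Set Matrix

theorem le_of_sq_le_mul_hasDerivAt {φ φ' : ℝ → ℝ} {θ : ℝ} (hθ : 0 ≤ θ)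
    (hφ : ∀ t ∈ Icc (0 : ℝ) 1, HasDerivAt φ (φ' t) t)
    (hbound : ∀ t ∈ Icc (0 : ℝ) 1, φ t ^ 2 ≤ θ * φ' t) : φ 0 ≤ θ := by
  by_contra! hφ₀
  have h0 : (0 : ℝ) ∈ Icc (0 : ℝ) 1 := left_mem_Icc.2 zero_le_one
  have h1 : (1 : ℝ) ∈ Icc (0 : ℝ) 1 := right_mem_Icc.2 zero_le_one
  have hθpos : 0 < θ := by
    refine hθ.lt_of_ne fun hθ0 => ?_
    have := hbound 0 h0
    rw [← hθ0] at this hφ₀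
    nlinarith
  have hφ'_nonneg : ∀ t ∈ Icc (0 : ℝ) 1, 0 ≤ φ' t := fun t ht =>
    (mul_nonneg_iff_of_pos_left hθpos).1 ((sq_nonneg _).trans (hbound t ht))
  have hmono : MonotoneOn φ (Icc 0 1) :=
    monotoneOn_of_hasDerivWithinAt_nonneg (convex_Icc 0 1)
      (fun t ht => (hφ t ht).continuousAt.continuousWithinAt)
      (fun t ht => (hφ t (interior_subset ht)).hasDerivWithinAt)
      (fun t ht => hφ'_nonneg t (interior_subset ht))
  have hφ_gt : ∀ t ∈ Icc (0 : ℝ) 1, θ < φ t := fun t ht =>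
    hφ₀.trans_le (hmono h0 ht ht.1)
  -- The Riccati inequality `φ' ≥ φ² / θ` makes `θ / φ t + t` nonincreasing,
  -- so `φ` would blow up before `t = 1`.
  have hχ : ∀ t ∈ Icc (0 : ℝ) 1,
      HasDerivAt (fun s => θ / φ s + s) ((0 * φ t - θ * φ' t) / φ t ^ 2 + 1) t := fun t ht =>
    ((hasDerivAt_const t θ).div (hφ t ht) (hθpos.trans (hφ_gt t ht)).ne').add
      (hasDerivAt_id t)
  have hanti : AntitoneOn (fun s => θ / φ s + s) (Icc 0 1) := by
    refine antitoneOn_of_hasDerivWithinAt_nonpos (convex_Icc 0 1)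
      (fun t ht => (hχ t ht).continuousAt.continuousWithinAt)
      (fun t ht => (hχ t (interior_subset ht)).hasDerivWithinAt) fun t ht => ?_
    have ht := interior_subset ht
    have hφt : 0 < φ t ^ 2 := pow_pos (hθpos.trans (hφ_gt t ht)) 2
    rw [zero_mul, zero_sub, neg_div, neg_add_nonpos_iff, one_le_div hφt]
    exact hbound t ht
  have hχ01 := hanti h0 h1 zero_le_one
  have hθφ₀ : θ / φ 0 < 1 := (div_lt_one (hθpos.trans hφ₀)).2 hφ₀
  have hθφ₁ : 0 ≤ θ / φ 1 := div_nonneg hθ (hθpos.trans (hφ_gt 1 h1)).le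
  simp only at hχ01
  linarith

theorem dotProduct_grad_eq_of_isLocalMin {n : ℕ} {f : (Fin n → ℝ) → ℝ} {g : Fin n → ℝ}
    {c z : Fin n → ℝ} {η : ℝ} (hdiff : DifferentiableAt ℝ f z)
    (hgrad : ∀ v, fderiv ℝ f z v = g ⬝ᵥ v)
    (hmin : IsLocalMin (fun y => η * c ⬝ᵥ y + f y) z) (v : Fin n → ℝ) :
    g ⬝ᵥ v = -(η * c ⬝ᵥ v) := by
  let L : (Fin n → ℝ) →L[ℝ] ℝ := LinearMap.toContinuousLinearMap (dotProductBilin ℝ ℝ c)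
  have hF : HasFDerivAt (fun y => η * c ⬝ᵥ y + f y) (η • L + fderiv ℝ f z) z :=
    (L.hasFDerivAt.const_mul η).add hdiff.hasFDerivAt
  have := congrArg (· v) (hmin.hasFDerivAt_eq_zero hF)
  simp only [_root_.add_apply, _root_.smul_apply, hgrad,
    _root_.zero_apply, smul_eq_mul] at this
  change η * c ⬝ᵥ v + g ⬝ᵥ v = 0 at this
  linarith

theorem quadForm_nonneg {n : ℕ} {M : Matrix (Fin n) (Fin n) ℝ} (hM : M.PosSemidef)
    (v : Fin n → ℝ) : 0 ≤ quadForm M v :=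
  hM.dotProduct_mulVec_nonneg v

theorem sq_dotProduct_mulVec_le {n : ℕ} {M : Matrix (Fin n) (Fin n) ℝ} (hM : M.PosSemidef)
    (a b : Fin n → ℝ) : (a ⬝ᵥ M *ᵥ b) ^ 2 ≤ quadForm M a * quadForm M b := by
  let := M.toSeminormedAddCommGroup hM
  let := M.toInnerProductSpace hM
  have hinner : ∀ x y : Fin n → ℝ, inner ℝ x y = x ⬝ᵥ M *ᵥ y := fun x y => by
    rw [dotProduct_comm]; rfl
  simpa only [hinner, sq, quadForm] using real_inner_mul_inner_self_le a b

theorem sq_dotProduct_le_quadForm_inv_mulVec_mul {n : ℕ} {M : Matrix (Fin n) (Fin n) ℝ}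
    (hM : M.PosDef) (g u : Fin n → ℝ) :
    (g ⬝ᵥ u) ^ 2 ≤ quadForm M (M⁻¹ *ᵥ g) * quadForm M u := by
  have hg : M *ᵥ (M⁻¹ *ᵥ g) = g := by
    rw [mulVec_mulVec, mul_nonsing_inv _ ((isUnit_iff_isUnit_det _).1 hM.isUnit), one_mulVec]
  have hT : Mᵀ = M := by
    simpa only [conjTranspose_eq_transpose_of_trivial] using hM.isHermitian.eq
  calc (g ⬝ᵥ u) ^ 2 = ((M⁻¹ *ᵥ g) ⬝ᵥ M *ᵥ u) ^ 2 := by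
        rw [dotProduct_mulVec, ← mulVec_transpose, hT, hg]
    _ ≤ _ := sq_dotProduct_mulVec_le hM.posSemidef _ _

section Barrier

variable {n : ℕ} {U : Set (Fin n → ℝ)} {f : (Fin n → ℝ) → ℝ} {g : (Fin n → ℝ) → Fin n → ℝ}
  {H : (Fin n → ℝ) → Matrix (Fin n) (Fin n) ℝ} {θ : ℝ}

theorem differentiableAt_dotProduct_grad (hU : IsOpen U) (hf : ContDiffOn ℝ 2 f U)
    (hgrad : ∀ x ∈ U, ∀ v, fderiv ℝ f x v = g x ⬝ᵥ v) {x : Fin n → ℝ} (hx : x ∈ U)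
    (v : Fin n → ℝ) : DifferentiableAt ℝ (fun y => g y ⬝ᵥ v) x := by
  have hf' : ContDiffAt ℝ 1 (fderiv ℝ f) x :=
    (hf.contDiffAt (hU.mem_nhds hx)).fderiv_right le_rfl
  have hf'v : DifferentiableAt ℝ (fun y => fderiv ℝ f y v) x :=
    (hf'.differentiableAt one_ne_zero).clm_apply (differentiableAt_const v)
  exact hf'v.congr_of_eventuallyEq (Filter.eventually_of_mem (hU.mem_nhds hx) fun y hy =>
    (hgrad y hy v).symm)

theorem hasDerivAt_dotProduct_grad_line (hU : IsOpen U) (hf : ContDiffOn ℝ 2 f U)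
    (hgrad : ∀ x ∈ U, ∀ v, fderiv ℝ f x v = g x ⬝ᵥ v)
    (hHess : ∀ x ∈ U, ∀ v w, fderiv ℝ (fun y => g y ⬝ᵥ v) x w = v ⬝ᵥ H x *ᵥ w)
    {x u : Fin n → ℝ} {t : ℝ} (ht : x + t • u ∈ U) :
    HasDerivAt (fun s : ℝ => g (x + s • u) ⬝ᵥ u) (quadForm (H (x + t • u)) u) t := by
  have hline : HasDerivAt (fun s : ℝ => x + s • u) u t := by
    simpa using ((hasDerivAt_id t).smul_const u).const_add x
  have := (differentiableAt_dotProduct_grad hU hf hgrad ht u).hasFDerivAt.comp_hasDerivAt t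
    hline
  rwa [hHess _ ht u u] at this

theorem dotProduct_grad_sub_le (hU : IsOpen U) (hUconv : Convex ℝ U) (hf : ContDiffOn ℝ 2 f U)
    (hgrad : ∀ x ∈ U, ∀ v, fderiv ℝ f x v = g x ⬝ᵥ v)
    (hHess : ∀ x ∈ U, ∀ v w, fderiv ℝ (fun y => g y ⬝ᵥ v) x w = v ⬝ᵥ H x *ᵥ w)
    (hposdef : ∀ x ∈ U, (H x).PosDef) (hθ : ∀ x ∈ U, quadForm (H x) ((H x)⁻¹ *ᵥ g x) ≤ θ)
    {x y : Fin n → ℝ} (hx : x ∈ U) (hy : y ∈ U) : g x ⬝ᵥ (y - x) ≤ θ := by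
  have hseg : ∀ t ∈ Icc (0 : ℝ) 1, x + t • (y - x) ∈ U := fun t ht =>
    hUconv.add_smul_sub_mem hx hy ht
  have hθ₀ : 0 ≤ θ := (quadForm_nonneg (hposdef x hx).posSemidef _).trans (hθ x hx)
  have := le_of_sq_le_mul_hasDerivAt hθ₀
    (fun t ht => hasDerivAt_dotProduct_grad_line hU hf hgrad hHess (hseg t ht)) fun t ht =>
      (sq_dotProduct_le_quadForm_inv_mulVec_mul (hposdef _ (hseg t ht)) _ _).trans
        (mul_le_mul_of_nonneg_right (hθ _ (hseg t ht))
          (quadForm_nonneg (hposdef _ (hseg t ht)).posSemidef _))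
  simpa using this

theorem dotProduct_grad_sub_le_of_mem_closure (hU : IsOpen U) (hUconv : Convex ℝ U)
    (hf : ContDiffOn ℝ 2 f U) (hgrad : ∀ x ∈ U, ∀ v, fderiv ℝ f x v = g x ⬝ᵥ v)
    (hHess : ∀ x ∈ U, ∀ v w, fderiv ℝ (fun y => g y ⬝ᵥ v) x w = v ⬝ᵥ H x *ᵥ w)
    (hposdef : ∀ x ∈ U, (H x).PosDef) (hθ : ∀ x ∈ U, quadForm (H x) ((H x)⁻¹ *ᵥ g x) ≤ θ)
    {x y : Fin n → ℝ} (hx : x ∈ U) (hy : y ∈ closure U) : g x ⬝ᵥ (y - x) ≤ θ :=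
  closure_minimal
    (fun _ hy => dotProduct_grad_sub_le hU hUconv hf hgrad hHess hposdef hθ hx hy)
    (isClosed_le (continuous_const.dotProduct (continuous_id.sub continuous_const))
      continuous_const) hy

end Barrier

theorem stmt8_general (n : ℕ) (K : Set (Fin n → ℝ)) (c : Fin n → ℝ) (f : (Fin n → ℝ) → ℝ)
    (g : (Fin n → ℝ) → (Fin n → ℝ))
    (H : (Fin n → ℝ) → Matrix (Fin n) (Fin n) ℝ)
    (θ : ℝ)
    (hKconv : Convex ℝ K)
    (hf : ContDiffOn ℝ 2 f (interior K))
    (hgrad : ∀ x ∈ interior K, ∀ v : Fin n → ℝ,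
      fderiv ℝ f x v = dotProduct (g x) v)
    (hHess : ∀ x ∈ interior K, ∀ v w : Fin n → ℝ,
      fderiv ℝ (fun y => dotProduct (g y) v) x w = dotProduct v ((H x).mulVec w))
    (hposdef : ∀ x ∈ interior K, (H x).PosDef)
    (hθ : ∀ x ∈ interior K, quadForm (H x) ((H x)⁻¹.mulVec (g x)) ≤ θ)
    (C : ℝ → Fin n → ℝ)
    (hC : ∀ η : ℝ, 0 < η → C η ∈ interior K ∧
      ∀ y ∈ interior K,
        η * dotProduct c (C η) + f (C η) ≤ η * dotProduct c y + f y)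
    (val : ℝ) (hval : IsLeast ((fun x => dotProduct c x) '' K) val) :
    ∀ η : ℝ, 0 < η → dotProduct c (C η) ≤ val + θ / η := by
  intro η hη
  obtain ⟨hz, hmin⟩ := hC η hη
  obtain ⟨x, hxK, rfl⟩ := hval.1
  have hfoc := dotProduct_grad_eq_of_isLocalMin
    ((hf.contDiffAt (isOpen_interior.mem_nhds hz)).differentiableAt two_ne_zero) (hgrad _ hz)
    (Filter.eventually_of_mem (isOpen_interior.mem_nhds hz) hmin) (x - C η)
  have hx : x ∈ closure (interior K) := by
    rw [hKconv.closure_interior_eq_closure_of_nonempty_interior ⟨C η, hz⟩]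
    exact subset_closure hxK
  have hsemi := dotProduct_grad_sub_le_of_mem_closure isOpen_interior hKconv.interior hf hgrad
    hHess hposdef hθ hz hx
  rw [hfoc, dotProduct_sub] at hsemi
  rw [← sub_le_iff_le_add', le_div_iff₀ hη]
  linarith

/-- value bound along the central path of a ϑ-self-concordant barrier over
a convex body `K`: `⟨c, C(η)⟩ ≤ val + ϑ/η`. -/
theorem stmt8 (n : ℕ) (K : Set (Fin n → ℝ)) (c : Fin n → ℝ) (f : (Fin n → ℝ) → ℝ)
    (g : (Fin n → ℝ) → (Fin n → ℝ))
    (H : (Fin n → ℝ) → Matrix (Fin n) (Fin n) ℝ)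
    (θ : ℝ)
    (hKcomp : IsCompact K) (hKconv : Convex ℝ K) (hKint : (interior K).Nonempty)
    (hf : ContDiffOn ℝ 2 f (interior K))
    (hgrad : ∀ x ∈ interior K, ∀ v : Fin n → ℝ,
      fderiv ℝ f x v = dotProduct (g x) v)
    (hHess : ∀ x ∈ interior K, ∀ v w : Fin n → ℝ,
      fderiv ℝ (fun y => dotProduct (g y) v) x w = dotProduct v ((H x).mulVec w))
    (hposdef : ∀ x ∈ interior K, (H x).PosDef)
    (hsc1 : ∀ x ∈ interior K, ∀ y : Fin n → ℝ, quadForm (H x) (y - x) < 1 → y ∈ interior K)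
    (hsc2 : ∀ x ∈ interior K, ∀ y : Fin n → ℝ, quadForm (H x) (y - x) < 1 →
      ∀ v : Fin n → ℝ, v ≠ 0 →
        1 - Real.sqrt (quadForm (H x) (y - x)) ≤
            Real.sqrt (quadForm (H y) v) / Real.sqrt (quadForm (H x) v) ∧
        Real.sqrt (quadForm (H y) v) / Real.sqrt (quadForm (H x) v) ≤
            1 / (1 - Real.sqrt (quadForm (H x) (y - x))))
    (hθ : ∀ x ∈ interior K, quadForm (H x) ((H x)⁻¹.mulVec (g x)) ≤ θ)
    (C : ℝ → Fin n → ℝ)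
    (hC : ∀ η : ℝ, 0 < η → C η ∈ interior K ∧
      ∀ y ∈ interior K,
        η * dotProduct c (C η) + f (C η) ≤ η * dotProduct c y + f y)
    (val : ℝ) (hval : IsLeast ((fun x => dotProduct c x) '' K) val) :
    ∀ η : ℝ, 0 < η → dotProduct c (C η) ≤ val + θ / η :=
  stmt8_general n K c f g H θ hKconv hf hgrad hHess hposdef hθ C hC val hval
end

section
/- For any two points u, v ∈ R^n, the tropical segment tsegm(u,v) = {(u + λe) ∨ (v + μe) : λ, μ ∈ R ∪ {−∞}, max(λ,μ) = 0} is a polygonal curve connecting u and v, each of whose ordinary line segments is directed by a vector with entries in {0, ±1}. -/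
/-!
A point `(u + λe) ∨ (v + μe)` of the segment with `max(λ, μ) = 0` is `tsegmPath u v s` for
`s = μ` (if `λ = 0`) or `s = -λ` (if `μ = 0`). Coordinate `i` of this path is
`max (u i) (v i + s)` for `s ≤ 0` and `max (u i - s) (v i)` for `s ≥ 0`: it is piecewise affine
with slopes in `{0, ±1}` and breakpoints among `0` and `u i - v i`, and the path equals `u`
left of all breakpoints and `v` right of them. Cutting `ℝ` at the sorted breakpoints therefore
cuts the path into the required straight pieces.
-/

/-- The tropical segment between two points `u, v ∈ ℝⁿ`: all points
`(u + λe) ∨ (v + μe)` with `max(λ, μ) = 0` (for real `u, v` the extreme values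
`λ, μ = −∞` are realized by sufficiently negative real scalars). -/
def tsegm {n : ℕ} (u v : Fin n → ℝ) : Set (Fin n → ℝ) :=
  {w | ∃ lam mu : ℝ, max lam mu = 0 ∧ w = fun i => max (u i + lam) (v i + mu)}

open Set

theorem Icc_subset_iUnion_Icc_castSucc_succ {α : Type*} [LinearOrder α] :
    ∀ {k : ℕ} (g : Fin (k + 2) → α),
      Icc (g 0) (g (Fin.last _)) ⊆ ⋃ i : Fin (k + 1), Icc (g i.castSucc) (g i.succ)
  | 0, g => subset_iUnion (fun i : Fin 1 => Icc (g i.castSucc) (g i.succ)) 0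
  | k + 1, g => by
    refine Icc_subset_Icc_union_Icc (b := g (Fin.last (k + 1)).castSucc) |>.trans
      (union_subset ?_ (subset_iUnion_of_subset (Fin.last _) subset_rfl))
    refine (Icc_subset_iUnion_Icc_castSucc_succ (g ∘ Fin.castSucc)).trans
      (iUnion_subset fun i => subset_iUnion_of_subset i.castSucc ?_)
    simp only [Function.comp_apply, Fin.succ_castSucc, subset_rfl]

theorem Monotone.le_apply_castSucc_or_apply_succ_le {α : Type*} [Preorder α] {k : ℕ}
    {g : Fin (k + 1) → α} (hg : Monotone g) {x : α} (hx : x ∈ range g) (i : Fin k) :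
    x ≤ g i.castSucc ∨ g i.succ ≤ x := by
  obtain ⟨j, rfl⟩ := hx
  rcases le_or_gt j i.castSucc with h | h
  · exact .inl (hg h)
  · exact .inr (hg (Fin.castSucc_lt_iff_succ_le.1 h))

theorem range_eq_image_Icc {α β : Type*} [LinearOrder α] {f : α → β} {a b : α}
    (hab : a ≤ b) (ha : ∀ s ≤ a, f s = f a) (hb : ∀ s, b ≤ s → f s = f b) :
    range f = f '' Icc a b := by
  refine (image_subset_range f _).antisymm' ?_
  rintro _ ⟨s, rfl⟩
  rcases le_total s a with hs | hs
  · exact ha s hs ▸ mem_image_of_mem f (left_mem_Icc.2 hab)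
  rcases le_total b s with hs' | hs'
  · exact hb s hs' ▸ mem_image_of_mem f (right_mem_Icc.2 hab)
  · exact mem_image_of_mem f ⟨hs, hs'⟩

theorem image_Icc_eq_segment_of_eq_add_smul {E : Type*} [AddCommGroup E] [Module ℝ E]
    {f : ℝ → E} {a b : ℝ} (hab : a ≤ b) (d : E)
    (hf : ∀ s ∈ Icc a b, f s = f a + (s - a) • d) :
    f '' Icc a b = segment ℝ (f a) (f b) := by
  let L : ℝ →ᵃ[ℝ] E :=
    (AffineMap.lineMap (f a) (f a + d)).comp (AffineMap.id ℝ ℝ - AffineMap.const ℝ ℝ a)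
  have hL : EqOn f L (Icc a b) := fun s hs => by
    simp [L, hf s hs, AffineMap.lineMap_apply, add_comm]
  rw [hL.image_eq, ← segment_eq_Icc hab, image_segment, ← hL (left_mem_Icc.2 hab),
    ← hL (right_mem_Icc.2 hab)]

theorem range_eq_iUnion_segment_of_eq_add_smul {E : Type*} [AddCommGroup E] [Module ℝ E]
    {f : ℝ → E} {k : ℕ} {g : Fin (k + 2) → ℝ} (hg : Monotone g) (d : Fin (k + 1) → E)
    (hleft : ∀ s ≤ g 0, f s = f (g 0))
    (hright : ∀ s, g (Fin.last _) ≤ s → f s = f (g (Fin.last _)))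
    (hpiece : ∀ i : Fin (k + 1), ∀ s ∈ Icc (g i.castSucc) (g i.succ),
      f s = f (g i.castSucc) + (s - g i.castSucc) • d i) :
    range f = ⋃ i : Fin (k + 1), segment ℝ (f (g i.castSucc)) (f (g i.succ)) := by
  have hcover : Icc (g 0) (g (Fin.last _)) = ⋃ i : Fin (k + 1), Icc (g i.castSucc) (g i.succ) :=
    (Icc_subset_iUnion_Icc_castSucc_succ g).antisymm <| iUnion_subset fun i =>
      Icc_subset_Icc (hg (Fin.zero_le _)) (hg (Fin.le_last _))
  rw [range_eq_image_Icc (hg (Fin.zero_le _)) hleft hright, hcover, image_iUnion]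
  exact iUnion_congr fun i =>
    image_Icc_eq_segment_of_eq_add_smul (hg (Fin.castSucc_le_succ i)) (d i) (hpiece i)

variable {n : ℕ} (u v : Fin n → ℝ)

noncomputable def tsegmPath (s : ℝ) : Fin n → ℝ :=
  fun i => max (u i - max s 0) (v i + min s 0)

theorem tsegm_eq_range_tsegmPath : tsegm u v = range (tsegmPath u v) := by
  ext w
  constructor
  · rintro ⟨lam, mu, hmax, rfl⟩
    rcases max_choice lam mu with h | h <;> rw [hmax] at h
    · exact ⟨mu, funext fun i => by grind [tsegmPath]⟩
    · exact ⟨-lam, funext fun i => by grind [tsegmPath]⟩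
  · rintro ⟨s, rfl⟩
    exact ⟨-max s 0, min s 0, by grind, funext fun i => by simp [tsegmPath, sub_eq_add_neg]⟩

theorem tsegmPath_of_le {s : ℝ} (hs : s ≤ 0) (huv : ∀ i, s ≤ u i - v i) :
    tsegmPath u v s = u :=
  funext fun i => by grind [tsegmPath]

theorem tsegmPath_of_ge {s : ℝ} (hs : 0 ≤ s) (huv : ∀ i, u i - v i ≤ s) :
    tsegmPath u v s = v :=
  funext fun i => by grind [tsegmPath]

theorem tsegmPath_apply_eq_add_mul (i : Fin n) {a b : ℝ} (h0 : b ≤ 0 ∨ 0 ≤ a)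
    (hi : b ≤ u i - v i ∨ u i - v i ≤ a) :
    ∃ c : ℝ, (c = 0 ∨ c = 1 ∨ c = -1) ∧
      ∀ s ∈ Icc a b, tsegmPath u v s i = tsegmPath u v a i + c * (s - a) := by
  obtain h0 | h0 := h0 <;> obtain hi | hi := hi
  · exact ⟨0, by norm_num, fun s hs => by grind [tsegmPath]⟩
  · exact ⟨1, by norm_num, fun s hs => by grind [tsegmPath]⟩
  · exact ⟨-1, by norm_num, fun s hs => by grind [tsegmPath]⟩
  · exact ⟨0, by norm_num, fun s hs => by grind [tsegmPath]⟩

theorem exists_tsegmPath_eq_add_smul {a b : ℝ} (h0 : b ≤ 0 ∨ 0 ≤ a)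
    (huv : ∀ i, b ≤ u i - v i ∨ u i - v i ≤ a) :
    ∃ d : Fin n → ℝ, (∀ i, d i = 0 ∨ d i = 1 ∨ d i = -1) ∧
      ∀ s ∈ Icc a b, tsegmPath u v s = tsegmPath u v a + (s - a) • d := by
  choose d hd hpath using fun i => tsegmPath_apply_eq_add_mul u v i h0 (huv i)
  exact ⟨d, hd, fun s hs => funext fun i => by simp [hpath i s hs, mul_comm]⟩

/-- the tropical segment between `u` and `v` is a polygonal curve from `u`
to `v`, each of whose ordinary segments is directed by a vector with entries in
`{0, ±1}`. -/
theorem stmt12 (n : ℕ) (u v : Fin n → ℝ) :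
    ∃ (k : ℕ) (p : Fin (k + 1) → Fin n → ℝ),
      p 0 = u ∧ p (Fin.last k) = v ∧
      (∀ i : Fin k, ∃ (c : ℝ) (d : Fin n → ℝ), 0 ≤ c ∧
        (∀ j, d j = 0 ∨ d j = 1 ∨ d j = -1) ∧
        p i.succ = p i.castSucc + c • d) ∧
      tsegm u v = ⋃ i : Fin k, segment ℝ (p i.castSucc) (p i.succ) := by
  classical
  -- the extra breakpoint `1` only ensures at least two breakpoints, hence at least one piece
  set S : Finset ℝ := insert 1 (insert 0 (Finset.univ.image fun i => u i - v i))
  have h1S : (1 : ℝ) ∈ S := Finset.mem_insert_self _ _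
  have h0S : (0 : ℝ) ∈ S := Finset.mem_insert_of_mem (Finset.mem_insert_self _ _)
  have huvS : ∀ i, u i - v i ∈ S := fun i =>
    Finset.mem_insert_of_mem <| Finset.mem_insert_of_mem <|
      Finset.mem_image_of_mem _ (Finset.mem_univ i)
  obtain ⟨k, hk⟩ : ∃ k, S.card = k + 2 :=
    ⟨S.card - 2, by have := Finset.one_lt_card.2 ⟨1, h1S, 0, h0S, one_ne_zero⟩; omega⟩
  set g := S.orderEmbOfFin hk
  have hg : Monotone g := g.monotone
  have hgS : ∀ x ∈ S, x ∈ range g := fun x hx => by rwa [Finset.range_orderEmbOfFin]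
  have hg0 : ∀ x ∈ S, g 0 ≤ x := fun x hx => by
    obtain ⟨j, rfl⟩ := hgS x hx; exact hg (Fin.zero_le j)
  have hglast : ∀ x ∈ S, x ≤ g (Fin.last _) := fun x hx => by
    obtain ⟨j, rfl⟩ := hgS x hx; exact hg (Fin.le_last j)
  have hleft : ∀ s ≤ g 0, tsegmPath u v s = u := fun s hs =>
    tsegmPath_of_le u v (hs.trans (hg0 0 h0S)) fun i => hs.trans (hg0 _ (huvS i))
  have hright : ∀ s, g (Fin.last _) ≤ s → tsegmPath u v s = v := fun s hs =>
    tsegmPath_of_ge u v ((hglast 0 h0S).trans hs) fun i => (hglast _ (huvS i)).trans hs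
  choose d hd hpiece using fun i : Fin (k + 1) => exists_tsegmPath_eq_add_smul u v
    (hg.le_apply_castSucc_or_apply_succ_le (hgS 0 h0S) i).symm
    fun j => (hg.le_apply_castSucc_or_apply_succ_le (hgS _ (huvS j)) i).symm
  have hstep : ∀ i : Fin (k + 1), g i.castSucc ≤ g i.succ := fun i =>
    hg (Fin.castSucc_le_succ i)
  refine ⟨k + 1, fun j => tsegmPath u v (g j), hleft _ le_rfl, hright _ le_rfl,
    fun i => ⟨_, d i, sub_nonneg.2 (hstep i), hd i,
      hpiece i _ (right_mem_Icc.2 (hstep i))⟩, ?_⟩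
  rw [tsegm_eq_range_tsegmPath]
  exact range_eq_iUnion_segment_of_eq_add_smul hg d
    (fun s hs => (hleft s hs).trans (hleft _ le_rfl).symm)
    (fun s hs => (hright s hs).trans (hright _ le_rfl).symm) hpiece
end

section
/- For every λ ∈ R, the n-th coordinate of the tropical central path C(λ) of the tropical linear program tcex_n equals min(−λ, 0). Moreover, C(λ) = 0 (the all-zeros vector) for all λ ≤ 0. -/
open scoped BigOperators

/-- The exponents `u_k = 3·2^{k−2} − 1` (for `k ≥ 1`). -/
noncomputable def uexp (k : ℕ) : ℝ := 3 * (2 : ℝ) ^ ((k : ℝ) - 2) - 1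

/-- Access to the `j`-th coordinate (1-indexed, `1 ≤ j ≤ n`) of a vector in `Fin n`. -/
def idx (n : ℕ) (hn : 0 < n) (j : ℕ) : Fin n := ⟨(j - 1) % n, Nat.mod_lt _ hn⟩

/-- Feasible set of the tropical linear program `tcex_n`, with `T = ℝ ∪ {−∞}` modelled
inside `EReal`. -/
def tcexFeas (n : ℕ) (hn : 0 < n) (x : Fin n → EReal) : Prop :=
  (∀ i : ℕ, 1 ≤ i → i ≤ n - 1 →
    (⨆ j ∈ Finset.Icc 1 (i - 1), (((-uexp i : ℝ) : EReal) + x (idx n hn j))) ⊔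
        (((-uexp (i + 1) + 1 : ℝ) : EReal) + x (idx n hn i)) ≤
      (⨆ j ∈ Finset.Icc (i + 1) (n - 1), (((-uexp j : ℝ) : EReal) + x (idx n hn j))) ⊔
        x (idx n hn n) ⊔ ((-uexp n : ℝ) : EReal)) ∧
  (∀ j : Fin n, x j ≤ 0) ∧
  (∀ i : ℕ, 1 ≤ i → i ≤ n - 2 → x (idx n hn i) ≤ x (idx n hn (i + 1))) ∧
  (2 ≤ n → x (idx n hn (n - 1)) ≤ ((uexp n : ℝ) : EReal) + x (idx n hn n))

/-
Every constant vector `c ≤ 0` is feasible for `tcex_n`: in each constraint the left-hand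
terms are `c` shifted by `-u_i ≤ 0` or `-u_{i+1} + 1 ≤ 0`, while the right-hand side contains
`x_n = c`. Hence the supremum `C(λ)` dominates the constant vector `min(-λ, 0)`, and
`C(λ) ≤ 0`, `C(λ)_n ≤ -λ` force equality in the `n`-th coordinate, and everywhere once
`λ ≤ 0`.
-/

lemma uexp_nonneg {k : ℕ} (hk : 1 ≤ k) : 0 ≤ uexp k := by
  have hk' : (1 : ℝ) ≤ k := by exact_mod_cast hk
  have hpow : (2 : ℝ) ^ (-1 : ℝ) ≤ 2 ^ ((k : ℝ) - 2) :=
    Real.rpow_le_rpow_of_exponent_le one_le_two (by linarith)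
  rw [Real.rpow_neg_one] at hpow
  unfold uexp
  linarith

lemma one_le_uexp {k : ℕ} (hk : 2 ≤ k) : 1 ≤ uexp k := by
  have hk' : (2 : ℝ) ≤ k := by exact_mod_cast hk
  have hpow : (2 : ℝ) ^ (0 : ℝ) ≤ 2 ^ ((k : ℝ) - 2) :=
    Real.rpow_le_rpow_of_exponent_le one_le_two (by linarith)
  rw [Real.rpow_zero] at hpow
  unfold uexp
  linarith

lemma tcexFeas_const (n : ℕ) (hn : 0 < n) {c : EReal} (hc : c ≤ 0) :
    tcexFeas n hn (fun _ => c) := by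
  refine ⟨fun i hi _ => ?_, fun _ => hc, fun _ _ _ => le_rfl, fun hn2 => ?_⟩
  · refine sup_le (iSup₂_le fun j _ => ?_) ?_ |>.trans (le_sup_of_le_left le_sup_right)
    · exact add_le_of_nonpos_left (EReal.coe_nonpos.mpr (neg_nonpos.mpr (uexp_nonneg hi)))
    · exact add_le_of_nonpos_left
        (EReal.coe_nonpos.mpr (by linarith [one_le_uexp (k := i + 1) (by omega)]))
  · exact le_add_of_nonneg_left (EReal.coe_nonneg.mpr (uexp_nonneg (by omega)))

/-- the `n`-th coordinate of the tropical central path of `tcex_n` is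
`min(−λ, 0)`, and the path is the zero vector for `λ ≤ 0`. -/
theorem stmt13 (n : ℕ) (hn : 0 < n) (C : ℝ → Fin n → EReal)
    (hC : ∀ lam : ℝ,
      (tcexFeas n hn (C lam) ∧ C lam (idx n hn n) ≤ ((-lam : ℝ) : EReal)) ∧
      (∀ x : Fin n → EReal, tcexFeas n hn x → x (idx n hn n) ≤ ((-lam : ℝ) : EReal) →
        ∀ i, x i ≤ C lam i)) :
    (∀ lam : ℝ, C lam (idx n hn n) = ((min (-lam) 0 : ℝ) : EReal)) ∧
    (∀ lam : ℝ, lam ≤ 0 → C lam = fun _ => (0 : EReal)) := by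
  have lower : ∀ lam i, ((min (-lam) 0 : ℝ) : EReal) ≤ C lam i := fun lam =>
    (hC lam).2 _ (tcexFeas_const n hn (EReal.coe_nonpos.mpr (min_le_right _ _)))
      (EReal.coe_le_coe_iff.mpr (min_le_left _ _))
  have upper : ∀ lam i, C lam i ≤ 0 := fun lam => (hC lam).1.1.2.1
  refine ⟨fun lam => le_antisymm ?_ (lower lam _), fun lam hlam => funext fun i => ?_⟩
  · rw [EReal.coe_strictMono.monotone.map_min, EReal.coe_zero]
    exact le_min (hC lam).1.2 (upper lam _)
  · have hmin : min (-lam) 0 = 0 := min_eq_right (by linarith)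
    exact le_antisymm (upper lam i) (by simpa [hmin] using lower lam i)
end

section
/- For t sufficiently large, in the polytope cex_n(t), the two facets defined by the equalities Σ_{j=1}^n x_j = 1 and x_{n−1} = t^{u_n} x_n are disjoint: no feasible point satisfies both. -/
open scoped BigOperators

/-- Feasibility in the polytope `cex_n(t)`. -/
noncomputable def cexFeas (n : ℕ) (hn : 0 < n) (t : ℝ) (x : Fin n → ℝ) : Prop :=
  (∀ i : ℕ, 1 ≤ i → i ≤ n - 1 →
    t ^ (-uexp i) * (∑ j ∈ Finset.Icc 1 (i - 1), x (idx n hn j)) +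
        t ^ (-uexp (i + 1) + 1) * x (idx n hn i) ≤
      (∑ j ∈ Finset.Icc (i + 1) (n - 1), t ^ (-uexp j) * x (idx n hn j)) +
        x (idx n hn n) + t ^ (-uexp n)) ∧
  (∑ j, x j ≤ 1) ∧
  (0 ≤ x (idx n hn 1)) ∧
  (∀ i : ℕ, 1 ≤ i → i ≤ n - 2 → x (idx n hn i) ≤ x (idx n hn (i + 1))) ∧
  (x (idx n hn (n - 1)) ≤ t ^ (uexp n) * x (idx n hn n))

lemma idx_val_add_one {n : ℕ} (hn : 0 < n) (i : Fin n) : idx n hn (i + 1) = i :=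
  Fin.ext (by simp [idx, Nat.mod_eq_of_lt i.2])

lemma eq_rpow_neg_mul_of_eq_rpow_mul {t u a b : ℝ} (ht : 0 < t) (h : a = t ^ u * b) :
    b = t ^ (-u) * a := by
  rw [h, Real.rpow_neg ht.le, inv_mul_cancel_left₀ (Real.rpow_pos_of_pos ht _).ne']

namespace cexFeas

variable {n : ℕ} {hn : 0 < n} {t : ℝ} {x : Fin n → ℝ}

lemma monotoneOn (h : cexFeas n hn t x) :
    MonotoneOn (fun j => x (idx n hn j)) (Set.Icc 1 (n - 1)) :=
  monotoneOn_of_le_succ Set.ordConnected_Icc fun a _ ha hsa => by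
    simp only [Set.mem_Icc, Order.succ_eq_add_one] at ha hsa ⊢
    exact h.2.2.2.1 a ha.1 (by omega)

lemma nonneg (h : cexFeas n hn t x) {j : ℕ} (hj₁ : 1 ≤ j) (hj : j ≤ n - 1) :
    0 ≤ x (idx n hn j) :=
  h.2.2.1.trans (h.monotoneOn ⟨le_rfl, hj₁.trans hj⟩ ⟨hj₁, hj⟩ hj₁)

lemma coord_le_penultimate (h : cexFeas n hn t x) (h2 : 2 ≤ n) (ht : 1 ≤ t)
    (hlast : x (idx n hn n) = t ^ (-uexp n) * x (idx n hn (n - 1))) (i : Fin n) :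
    x i ≤ x (idx n hn (n - 1)) := by
  rw [← idx_val_add_one hn i]
  rcases Nat.lt_or_ge (i + 1) n with hi | hi
  · exact h.monotoneOn ⟨by omega, by omega⟩ ⟨by omega, le_rfl⟩ (by omega)
  · rw [show (i : ℕ) + 1 = n by omega, hlast]
    have : t ^ (-uexp n) ≤ 1 :=
      Real.rpow_le_one_of_one_le_of_nonpos ht (neg_nonpos.2 (uexp_nonneg (by omega)))
    exact mul_le_of_le_one_left (h.nonneg (by omega) le_rfl) this

lemma sub_one_mul_penultimate_le_one (h : cexFeas n hn t x) (h2 : 2 ≤ n) (ht : 0 < t)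
    (hlast : x (idx n hn n) = t ^ (-uexp n) * x (idx n hn (n - 1))) :
    (t - 1) * x (idx n hn (n - 1)) ≤ 1 := by
  have hc := h.1 (n - 1) (by omega) le_rfl
  rw [Nat.sub_add_cancel (by omega : 1 ≤ n), Finset.Icc_eq_empty (show ¬n ≤ n - 1 by omega),
    Finset.sum_empty, zero_add, Real.rpow_add ht, Real.rpow_one, hlast] at hc
  have hS : 0 ≤ t ^ (-uexp (n - 1)) * ∑ j ∈ Finset.Icc 1 (n - 1 - 1), x (idx n hn j) :=
    mul_nonneg (Real.rpow_pos_of_pos ht _).le <| Finset.sum_nonneg fun j hj => by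
      rw [Finset.mem_Icc] at hj
      exact h.nonneg hj.1 (by omega)
  refine le_of_mul_le_mul_left ?_ (Real.rpow_pos_of_pos ht (-uexp n))
  nlinarith

end cexFeas

/-- for `t` large enough, the facets of `cex_n(t)` given by
`Σⱼ xⱼ = 1` and `x_{n−1} = t^{u_n} x_n` are disjoint. -/
theorem stmt15 (n : ℕ) (hn : 2 ≤ n) :
    ∃ t₀ : ℝ, 1 < t₀ ∧ ∀ t : ℝ, t₀ ≤ t → ∀ x : Fin n → ℝ,
      cexFeas n (by omega) t x →
      ¬((∑ j, x j = 1) ∧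
        x (idx n (by omega) (n - 1)) = t ^ (uexp n) * x (idx n (by omega) n)) := by
  refine ⟨n + 2, by linarith [(Nat.cast_nonneg n : (0 : ℝ) ≤ n)], ?_⟩
  rintro t ht x hx ⟨hsum, hfacet⟩
  have ht1 : 1 ≤ t := by linarith [(Nat.cast_nonneg n : (0 : ℝ) ≤ n)]
  have ht0 : 0 < t := by linarith
  set y := x (idx n (by omega) (n - 1))
  have hy : 0 ≤ y := hx.nonneg (by omega) le_rfl
  have hlast := eq_rpow_neg_mul_of_eq_rpow_mul ht0 hfacet
  have hsum_le : 1 ≤ n * y := by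
    have := Finset.sum_le_card_nsmul Finset.univ x y
      fun i _ => hx.coord_le_penultimate hn ht1 hlast i
    rwa [hsum, Finset.card_univ, Fintype.card_fin, nsmul_eq_mul] at this
  have hbound : (n + 1) * y ≤ 1 :=
    (mul_le_mul_of_nonneg_right (by linarith) hy).trans
      (hx.sub_one_mul_penultimate_le_one hn ht0 hlast)
  nlinarith
end

section
/- Let P = {u ∈ R^n : Au ≤ b} be a nonempty polyhedron with A ∈ R^{m×n}, b ∈ R^m, and for ε ≥ 0 define the ε-erosion P^ε = {u ∈ P : u ± ε e_j ∈ P for all j} = {u : Au ≤ b − εa}, where a_i = min_j |A_{ij}|. Then there is a constant C_P ≥ 0 depending only on A such that for all ε with P^ε nonempty, the Hausdorff distance in the sup-norm satisfies d_∞(P, P^ε) ≤ C_P ε. -/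
/-!
Project `u ∈ P` onto the (Euclidean) eroded polyhedron `P' = {v : ⟪r i, v⟫ ≤ b' i}`, where
`b' i = b i - ε a i`; since `⟪r i, u⟫ ≤ b' i + ε max a`, everything follows from Hoffman's bound
`‖u - p‖ ≤ C D` whenever `⟪r i, u⟫ ≤ b' i + D`. Near the projection `p` the polyhedron looks like
the cone cut out by the active constraints `I`, so `u - p` lies in the double dual of
`{r i | i ∈ I}`. On that closed cone, `∑_{i ∈ I} max ⟪r i, w⟫ 0` vanishes only at `0`, so
compactness of the unit sphere gives `‖w‖ ≤ C_I D` once `⟪r i, w⟫ ≤ D` for `i ∈ I`. Taking the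
largest `C_I` over the finitely many `I` gives Hoffman's bound, and the sup-norm is dominated by the
Euclidean one.
-/

open Filter Topology ProperCone
open scoped RealInnerProductSpace Matrix

variable {E : Type*} [NormedAddCommGroup E] [InnerProductSpace ℝ E] {ι : Type*}

def polyhedron (r : ι → E) (b : ι → ℝ) : Set E := ⋂ i, {v | ⟪r i, v⟫ ≤ b i}

lemma mem_polyhedron {r : ι → E} {b : ι → ℝ} {v : E} :
    v ∈ polyhedron r b ↔ ∀ i, ⟪r i, v⟫ ≤ b i :=
  Set.mem_iInter

lemma convex_polyhedron (r : ι → E) (b : ι → ℝ) : Convex ℝ (polyhedron r b) :=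
  convex_iInter fun i => convex_halfSpace_le (innerSL ℝ (r i)).isLinear (b i)

lemma isClosed_polyhedron (r : ι → E) (b : ι → ℝ) : IsClosed (polyhedron r b) :=
  isClosed_iInter fun _ => isClosed_le (continuous_const.inner continuous_id) continuous_const

lemma sub_mem_innerDual_innerDual_of_inner_sub_le_zero [CompleteSpace E] [Finite ι]
    {r : ι → E} {b : ι → ℝ} {u p : E} (hp : p ∈ polyhedron r b)
    (hproj : ∀ v ∈ polyhedron r b, ⟪u - p, v - p⟫ ≤ 0) :
    u - p ∈ innerDual (innerDual (r '' {i | ⟪r i, p⟫ = b i}) : Set E) := by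
  intro d hd
  have hfeas : ∀ᶠ t in 𝓝[>] (0 : ℝ), p - t • d ∈ polyhedron r b := by
    simp only [mem_polyhedron]
    refine eventually_all.2 fun i => ?_
    rcases (mem_polyhedron.1 hp i).eq_or_lt with hact | hslack
    · filter_upwards [self_mem_nhdsWithin] with t (ht : 0 < t)
      have : 0 ≤ ⟪r i, d⟫ := hd ⟨i, hact, rfl⟩
      rw [inner_sub_right, real_inner_smul_right]
      nlinarith
    · have : Tendsto (fun t : ℝ => ⟪r i, p - t • d⟫) (𝓝 0) (𝓝 ⟪r i, p⟫) :=
        Continuous.tendsto' (by fun_prop) 0 _ (by simp)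
      exact ((this.eventually_lt_const hslack).mono fun _ => le_of_lt).filter_mono
        nhdsWithin_le_nhds
  show 0 ≤ ⟪d, u - p⟫
  obtain ⟨t, hpt, ht⟩ := (hfeas.and self_mem_nhdsWithin).exists
  have := hproj _ hpt
  rw [sub_sub_cancel_left, inner_neg_right, real_inner_smul_right, real_inner_comm] at this
  exact nonneg_of_mul_nonneg_right (by linarith) ht

lemma exists_norm_le_of_mem_innerDual_innerDual [FiniteDimensional ℝ E] [Finite ι] (r : ι → E) :
    ∃ C, 0 ≤ C ∧ ∀ w ∈ innerDual (innerDual (Set.range r) : Set E), ∀ D, 0 ≤ D →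
      (∀ i, ⟪r i, w⟫ ≤ D) → ‖w‖ ≤ C * D := by
  have := Fintype.ofFinite ι
  set N := innerDual (innerDual (Set.range r) : Set E)
  let g : E → ℝ := fun w => ∑ i, max ⟪r i, w⟫ 0
  have g_le (w : E) (D : ℝ) (hD : 0 ≤ D) (hw : ∀ i, ⟪r i, w⟫ ≤ D) :
      g w ≤ Fintype.card ι * D := by
    refine (Finset.sum_le_card_nsmul _ _ D fun i _ => max_le (hw i) hD).trans_eq ?_
    rw [nsmul_eq_mul, Finset.card_univ]
  have g_pos (w : E) (hw : w ∈ N) (hw0 : w ≠ 0) : 0 < g w := by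
    refine (Finset.sum_nonneg fun i _ => le_max_right _ _).lt_of_ne' fun hzero => hw0 ?_
    have hneg : -w ∈ innerDual (Set.range r) := by
      rintro _ ⟨i, rfl⟩
      have := (Finset.sum_eq_zero_iff_of_nonneg fun i _ => le_max_right _ _).1 hzero i
        (Finset.mem_univ _)
      show 0 ≤ ⟪r i, -w⟫
      rw [inner_neg_right]
      linarith [le_max_left ⟪r i, w⟫ 0]
    have : 0 ≤ ⟪-w, w⟫ := hw hneg
    rw [inner_neg_left, real_inner_self_eq_norm_sq] at this
    exact norm_eq_zero.1 (by nlinarith [norm_nonneg w])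
  obtain ⟨c, hc, hcg⟩ : ∃ c > 0, ∀ w ∈ (N : Set E) ∩ Metric.sphere 0 1, c ≤ g w := by
    rcases ((N : Set E) ∩ Metric.sphere 0 1).eq_empty_or_nonempty with hK | hK
    · exact ⟨1, one_pos, by simp [hK]⟩
    obtain ⟨w₀, hw₀, hmin⟩ := ((isCompact_sphere 0 1).inter_left N.isClosed).exists_isMinOn hK
      (f := g) (by fun_prop)
    exact ⟨g w₀, g_pos w₀ hw₀.1 (ne_zero_of_mem_unit_sphere ⟨w₀, hw₀.2⟩), fun w hw => hmin hw⟩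
  refine ⟨Fintype.card ι / c, by positivity, fun w hw D hD hwD => ?_⟩
  rcases eq_or_ne w 0 with rfl | hw0
  · simpa using mul_nonneg (by positivity : (0 : ℝ) ≤ Fintype.card ι / c) hD
  have hnorm : 0 < ‖w‖ := norm_pos_iff.2 hw0
  have hunit : ‖w‖⁻¹ • w ∈ (N : Set E) ∩ Metric.sphere 0 1 :=
    ⟨N.smul_mem hw (inv_nonneg.2 hnorm.le), by simp [norm_smul, hnorm.ne']⟩
  have := (hcg _ hunit).trans (g_le _ (D / ‖w‖) (by positivity) fun i => by
    rw [inner_smul_right, inv_mul_eq_div]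
    exact div_le_div_of_nonneg_right (hwD i) hnorm.le)
  rw [mul_div_assoc', le_div_iff₀ hnorm] at this
  rw [div_mul_eq_mul_div, le_div_iff₀ hc]
  linarith

theorem exists_hoffman_bound [FiniteDimensional ℝ E] [Finite ι] (r : ι → E) :
    ∃ C, 0 ≤ C ∧ ∀ (b : ι → ℝ) (D : ℝ), 0 ≤ D → (polyhedron r b).Nonempty →
      ∀ u, (∀ i, ⟪r i, u⟫ ≤ b i + D) → ∃ p ∈ polyhedron r b, ‖u - p‖ ≤ C * D := by
  choose C hC0 hC using fun s : Set ι =>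
    exists_norm_le_of_mem_innerDual_innerDual fun i : s => r i
  refine ⟨⨆ s, C s, Real.iSup_nonneg hC0, fun b D hD hne u hu => ?_⟩
  obtain ⟨p, hp, hmin⟩ := exists_norm_eq_iInf_of_complete_convex hne
    (isClosed_polyhedron r b).isComplete (convex_polyhedron r b) u
  have hproj := (norm_eq_iInf_iff_real_inner_le_zero (convex_polyhedron r b) hp).1 hmin
  have hnormal := sub_mem_innerDual_innerDual_of_inner_sub_le_zero hp hproj
  rw [Set.image_eq_range] at hnormal
  refine ⟨p, hp, (hC _ _ hnormal D hD fun i => ?_).trans ?_⟩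
  · rw [inner_sub_right, i.2]
    linarith [hu i]
  · gcongr
    exact le_ciSup (Finite.bddAbove_range C) _

lemma Matrix.exists_dist_le_of_mulVec_le {m n : Type*} [Fintype m] [Fintype n]
    (A : Matrix m n ℝ) :
    ∃ C, 0 ≤ C ∧ ∀ (b : m → ℝ) (D : ℝ), 0 ≤ D → {v | A *ᵥ v ≤ b}.Nonempty →
      ∀ u, (∀ i, (A *ᵥ u) i ≤ b i + D) → ∃ v, A *ᵥ v ≤ b ∧ dist u v ≤ C * D := by
  let r i : EuclideanSpace ℝ n := WithLp.toLp 2 (A i)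
  have hr (i) (v : n → ℝ) : ⟪r i, WithLp.toLp 2 v⟫ = (A *ᵥ v) i := by
    rw [EuclideanSpace.inner_toLp_toLp, star_trivial, dotProduct_comm]
    rfl
  have mem_iff (b : m → ℝ) (v : n → ℝ) : WithLp.toLp 2 v ∈ polyhedron r b ↔ A *ᵥ v ≤ b := by
    simp only [mem_polyhedron, hr, Pi.le_def]
  obtain ⟨C, hC0, hC⟩ := exists_hoffman_bound r
  refine ⟨C, hC0, fun b D hD ⟨v₀, hv₀⟩ u hu => ?_⟩
  obtain ⟨p, hp, hdist⟩ := hC b D hD ⟨_, (mem_iff b v₀).2 hv₀⟩ (WithLp.toLp 2 u) (by simpa [hr])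
  refine ⟨p.ofLp, (mem_iff b _).1 hp, ?_⟩
  calc dist u p.ofLp ≤ dist (WithLp.toLp 2 u) p := by
        simpa using (PiLp.lipschitzWith_ofLp 2 fun _ : n => ℝ).dist_le_mul (WithLp.toLp 2 u) p
    _ ≤ C * D := by rwa [dist_eq_norm]

theorem stmt18_general (m n : ℕ) (A : Matrix (Fin m) (Fin n) ℝ) :
    ∃ C : ℝ, 0 ≤ C ∧
      ∀ b : Fin m → ℝ,
        {u : Fin n → ℝ | A.mulVec u ≤ b}.Nonempty →
        ∀ ε : ℝ, 0 ≤ ε →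
          {u : Fin n → ℝ | A.mulVec u ≤ fun i => b i - ε * (⨅ j, |A i j|)}.Nonempty →
          Metric.hausdorffDist
              {u : Fin n → ℝ | A.mulVec u ≤ b}
              {u : Fin n → ℝ | A.mulVec u ≤ fun i => b i - ε * (⨅ j, |A i j|)} ≤
            C * ε := by
  set a : Fin m → ℝ := fun i => ⨅ j, |A i j|
  have ha (i) : 0 ≤ a i := Real.iInf_nonneg fun j => abs_nonneg (A i j)
  obtain ⟨C, hC0, hC⟩ := A.exists_dist_le_of_mulVec_le
  set M := ⨆ i, a i
  have hM : 0 ≤ M := Real.iSup_nonneg ha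
  refine ⟨C * M, mul_nonneg hC0 hM, fun b _ ε hε hne => ?_⟩
  apply Metric.hausdorffDist_le_of_mem_dist (by positivity)
  · intro u hu
    obtain ⟨v, hv, huv⟩ := hC _ (ε * M) (by positivity) hne u fun i => by
      nlinarith [hu i, le_ciSup (Finite.bddAbove_range a) i]
    exact ⟨v, hv, huv.trans_eq (by ring)⟩
  · intro v hv
    refine ⟨v, fun i => (hv i).trans ?_, by simpa using mul_nonneg (mul_nonneg hC0 hM) hε⟩
    nlinarith [ha i]

/-- for a polyhedron `P = {u : Au ≤ b}` and its `ε`-erosions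
`P^ε = {u : Au ≤ b − εa}` with `a_i = min_j |A_{ij}|`, there is a constant `C ≥ 0`
depending only on `A` such that `d_∞(P, P^ε) ≤ C ε` whenever `P^ε ≠ ∅`.
(The metric on `Fin n → ℝ` is the sup-metric, so `Metric.hausdorffDist` is the
`ℓ^∞` Hausdorff distance.) -/
theorem stmt18 (m n : ℕ) (hn : 0 < n) (A : Matrix (Fin m) (Fin n) ℝ) :
    ∃ C : ℝ, 0 ≤ C ∧
      ∀ b : Fin m → ℝ,
        {u : Fin n → ℝ | A.mulVec u ≤ b}.Nonempty →
        ∀ ε : ℝ, 0 ≤ ε →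
          {u : Fin n → ℝ | A.mulVec u ≤ fun i => b i - ε * (⨅ j, |A i j|)}.Nonempty →
          Metric.hausdorffDist
              {u : Fin n → ℝ | A.mulVec u ≤ b}
              {u : Fin n → ℝ | A.mulVec u ≤ fun i => b i - ε * (⨅ j, |A i j|)} ≤
            C * ε :=
  stmt18_general m n A
end
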